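/- Let m be a measure, and suppose a family of measurable sets satisfies: for all k > 1 and t > 0, m({|∇u| > t} ∩ {u ≤ k}) ≤ Ck/t² and m({u > k}) ≤ C/k^{N/(N-2)}, with N > 2. Then choosing k = t^{(N-2)/(N-1)} yields m({|∇u| > t}) ≤ 2C/t^{N/(N-1)} for all t ≥ 1. -/

import Mathlib

/-!
Split `{g > t}` along `{u ≤ k}`: this gives `m({g > t}) ≤ C k / t² + C / k^{N/(N-2)}`, and both terms
equal `C / t^{N/(N-1)}` at `k = t^{(N-2)/(N-1)}`. That level may be exactly `1` (when `t = 1`), where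
the first estimate is not available, so the split is made at every larger `k` and `k` is then let
decrease to the balanced level.
-/

open MeasureTheory Filter Topology Set

lemma measure_le_inter_le_add_lt {α β : Type*} [MeasurableSpace α] [LinearOrder β]
    (μ : Measure α) (s : Set α) (u : α → β) (k : β) :
    μ s ≤ μ (s ∩ {x | u x ≤ k}) + μ {x | k < u x} :=
  (measure_le_inter_add_sdiff μ s {x | u x ≤ k}).trans <|
    add_le_add_right (measure_mono fun _ hx ↦ not_le.mp hx.2) _

lemma le_of_forall_gt_of_continuousWithinAt {β : Type*} [TopologicalSpace β] [Preorder β]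
    [ClosedIciTopology β] {f : ℝ → β} {a : β} {x : ℝ} (hf : ContinuousWithinAt f (Ioi x) x)
    (h : ∀ y, x < y → a ≤ f y) : a ≤ f x :=
  ge_of_tendsto hf (eventually_nhdsWithin_of_forall h)

lemma continuousAt_mul_div_add_div_rpow (C s p : ℝ) {k : ℝ} (hk : 0 < k) :
    ContinuousAt (fun k : ℝ ↦ C * k / s + C / k ^ p) k :=
  ((continuousAt_id.const_mul C).div_const s).add <|
    continuousAt_const.div (Real.continuousAt_rpow_const _ _ (.inl hk.ne')) (by positivity)

lemma add_div_rpow_at_balanced_level {n t : ℝ} (C : ℝ) (hn1 : n ≠ 1) (hn2 : n ≠ 2) (ht : 0 < t) :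
    C * t ^ ((n - 2) / (n - 1)) / t ^ 2 + C / (t ^ ((n - 2) / (n - 1))) ^ (n / (n - 2)) =
      2 * C / t ^ (n / (n - 1)) := by
  have hn1' : n - 1 ≠ 0 := sub_ne_zero.mpr hn1
  have hn2' : n - 2 ≠ 0 := sub_ne_zero.mpr hn2
  have hpow : (t ^ ((n - 2) / (n - 1))) ^ (n / (n - 2)) = t ^ (n / (n - 1)) := by
    rw [← Real.rpow_mul ht.le]
    congr 1
    field_simp
  have hdiv : t ^ ((n - 2) / (n - 1)) / t ^ 2 = (t ^ (n / (n - 1)))⁻¹ := by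
    rw [← Real.rpow_two, ← Real.rpow_sub ht, ← Real.rpow_neg ht.le]
    congr 1
    field_simp
    ring
  rw [mul_div_assoc, hdiv, hpow]
  ring

theorem gradient_level_set_estimate_general {α : Type*} [MeasurableSpace α] (μ : Measure α)
    (N : ℕ) (hN : 2 < N) (g u : α → ℝ)
    (C : ℝ) (hC : 0 ≤ C)
    (h1 : ∀ k t : ℝ, 1 < k → 0 < t →
      μ ({x | t < g x} ∩ {x | u x ≤ k}) ≤ ENNReal.ofReal (C * k / t ^ 2))
    (h2 : ∀ k : ℝ, 1 ≤ k →
      μ {x | k < u x} ≤ ENNReal.ofReal (C / k ^ ((N : ℝ) / ((N : ℝ) - 2)))) :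
    ∀ t : ℝ, 1 ≤ t →
      μ {x | t < g x} ≤ ENNReal.ofReal (2 * C / t ^ ((N : ℝ) / ((N : ℝ) - 1))) := by
  intro t ht
  have hN' : (2 : ℝ) < N := by exact_mod_cast hN
  have ht₀ : 0 < t := one_pos.trans_le ht
  set k₀ := t ^ (((N : ℝ) - 2) / ((N : ℝ) - 1)) with hk₀_def
  have hk₀ : 1 ≤ k₀ := Real.one_le_rpow ht (div_nonneg (by linarith) (by linarith))
  have hsplit : ∀ k, k₀ < k → μ {x | t < g x} ≤
      ENNReal.ofReal (C * k / t ^ 2 + C / k ^ ((N : ℝ) / ((N : ℝ) - 2))) := fun k hk ↦ by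
    have hk1 : 1 < k := hk₀.trans_lt hk
    calc μ {x | t < g x}
        ≤ μ ({x | t < g x} ∩ {x | u x ≤ k}) + μ {x | k < u x} :=
          measure_le_inter_le_add_lt μ _ u k
      _ ≤ _ := add_le_add (h1 k t hk1 ht₀) (h2 k hk1.le)
      _ = _ := (ENNReal.ofReal_add (by positivity) (by positivity)).symm
  have hbound := le_of_forall_gt_of_continuousWithinAt
    (ENNReal.continuous_ofReal.continuousAt.comp
      (continuousAt_mul_div_add_div_rpow C _ _ (one_pos.trans_le hk₀))).continuousWithinAt hsplit
  rwa [Function.comp_apply, hk₀_def, add_div_rpow_at_balanced_level C (by linarith) (by linarith) ht₀] at hbound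

/-- Abstract gradient-level-set estimate: if `m({g > t} ∩ {u ≤ k}) ≤ C k / t²` for all
`k > 1`, `t > 0`, and `m({u > k}) ≤ C / k^{N/(N-2)}` for all `k ≥ 1` (with `N > 2`),
then choosing `k = t^{(N-2)/(N-1)}` yields `m({g > t}) ≤ 2C / t^{N/(N-1)}` for `t ≥ 1`. -/
theorem gradient_level_set_estimate {α : Type*} [MeasurableSpace α] (μ : Measure α)
    (N : ℕ) (hN : 2 < N) (g u : α → ℝ) (hg : Measurable g) (hu : Measurable u)
    (C : ℝ) (hC : 0 ≤ C)
    (h1 : ∀ k t : ℝ, 1 < k → 0 < t →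
      μ ({x | t < g x} ∩ {x | u x ≤ k}) ≤ ENNReal.ofReal (C * k / t ^ 2))
    (h2 : ∀ k : ℝ, 1 ≤ k →
      μ {x | k < u x} ≤ ENNReal.ofReal (C / k ^ ((N : ℝ) / ((N : ℝ) - 2)))) :
    ∀ t : ℝ, 1 ≤ t →
      μ {x | t < g x} ≤ ENNReal.ofReal (2 * C / t ^ ((N : ℝ) / ((N : ℝ) - 1))) :=
  gradient_level_set_estimate_general μ N hN g u C hC h1 h2
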